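/- Let K be a field, and let q, a ∈ K with q nonzero and q^m ≠ 1 for all integers m ≥ 1. Then the following identity holds in the formal power series ring K⟦X⟧: ∑_{k=0}^{∞} q^k X^k · (∏_{j=0}^{k−1}(1 − X q^{−j})) · (∏_{j=0}^{k−1}(1 − a q^{j−1})) / (q;q)_k = ∑_{d₁,d₂,d₃,d₄ ≥ 0} (−1)^{d₂+d₄} a^{d₂} q^{d₁ + d₃ + d₂(d₂−1)/2 + d₄(d₄+1)/2 − d₁d₄ − d₂d₄} X^{d₁+d₂+d₃+d₄} / ((q;q)_{d₁}(q;q)_{d₂}(q;q)_{d₃}(q;q)_{d₄}). (Both sides are formally summable in K⟦X⟧: the k-th term on the left has X-order ≥ k and the term indexed by d on the right has X-order d₁+d₂+d₃+d₄.) -/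

import Mathlib

/-!
Both sides are expanded with the finite `q`-binomial theorem
`∏_{l<k} (1 - qˡ z) = ∑_{i+j=k} (-1)ⁱ q^{i(i-1)/2} (q;q)_k / ((q;q)_i (q;q)_j) zⁱ`.
The coefficient of `Xᵉ` in `∏_{l<k} (1 - q⁻ˡ X)` obeys the same Pascal recursion in `k` as
`qᵉ ∏_{j<e} (1 - q^{j-k}) / (q;q)_e`, so the two agree. Expanding the `a`-product with
`z = a q⁻¹` and this last product with `z = q⁻ᵏ` turns the coefficient of `Xⁿ` on the left into a
sum over `d₁ + d₂ = k`, `d₃ + d₄ = n - k`, whose terms are exactly the quiver summands.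
-/

/-- The q-Pochhammer symbol `(q;q)_n = ∏_{k=1}^{n} (1 − qᵏ)`. -/
def pochQ {K : Type*} [Field K] (q : K) (n : ℕ) : K :=
  ∏ k ∈ Finset.range n, (1 - q ^ (k + 1))

open Finset PowerSeries

section CommRing

variable {R : Type*} [CommRing R]

/-- The coefficient of `zⁱ` in `∏_{l<k} (1 - pˡ z)`. -/
def qPochhammerCoeff (p : R) : ℕ → ℕ → R
  | _, 0 => 1
  | 0, _ + 1 => 0
  | k + 1, i + 1 => qPochhammerCoeff p k (i + 1) - p ^ k * qPochhammerCoeff p k i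

theorem qPochhammerCoeff_eq_zero_of_lt (p : R) {k i : ℕ} (h : k < i) :
    qPochhammerCoeff p k i = 0 := by
  induction k generalizing i with
  | zero => obtain ⟨i, rfl⟩ := Nat.exists_eq_add_one_of_ne_zero (by omega : i ≠ 0); rfl
  | succ k ih =>
    obtain ⟨i, rfl⟩ := Nat.exists_eq_add_one_of_ne_zero (by omega : i ≠ 0)
    simp only [qPochhammerCoeff, ih (by omega : k < i + 1), ih (by omega : k < i), mul_zero,
      sub_zero]

@[simp]
theorem qPochhammerCoeff_zero_right (p : R) (k : ℕ) : qPochhammerCoeff p k 0 = 1 := by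
  cases k <;> rfl

theorem prod_range_one_sub_pow_mul (p z : R) (k : ℕ) :
    ∏ l ∈ range k, (1 - p ^ l * z) = ∑ i ∈ range (k + 1), qPochhammerCoeff p k i * z ^ i := by
  induction k with
  | zero => simp [qPochhammerCoeff]
  | succ k ih =>
    have hshift := sum_range_succ' (fun i => qPochhammerCoeff p k i * z ^ i) (k + 1)
    rw [sum_range_succ, qPochhammerCoeff_eq_zero_of_lt p (Nat.lt_succ_self k), zero_mul,
      add_zero] at hshift
    have hlower : ∑ i ∈ range (k + 1), p ^ k * qPochhammerCoeff p k i * z ^ (i + 1)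
        = p ^ k * z * ∑ i ∈ range (k + 1), qPochhammerCoeff p k i * z ^ i := by
      rw [mul_sum]
      exact sum_congr rfl fun i _ => by ring
    rw [prod_range_succ, ih, sum_range_succ' _ (k + 1)]
    simp only [qPochhammerCoeff, sub_mul, sum_sub_distrib]
    rw [hlower, hshift, qPochhammerCoeff_zero_right]
    ring

theorem coeff_prod_range_one_sub_C_pow_mul_X (p : R) (k i : ℕ) :
    coeff i (∏ l ∈ range k, (1 - C (p ^ l) * X)) = qPochhammerCoeff p k i := by
  induction k generalizing i with
  | zero => cases i <;> simp [qPochhammerCoeff, coeff_one]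
  | succ k ih =>
    rw [prod_range_succ, mul_sub, mul_one, map_sub]
    cases i with
    | zero => simp
    | succ i =>
      rw [mul_left_comm, ← mul_assoc, coeff_succ_mul_X, coeff_C_mul, ih, ih]
      rfl

end CommRing

section Field

variable {K : Type*} [Field K]

@[simp]
theorem pochQ_zero (q : K) : pochQ q 0 = 1 := prod_range_zero _

theorem pochQ_succ (q : K) (n : ℕ) : pochQ q (n + 1) = pochQ q n * (1 - q ^ (n + 1)) :=
  prod_range_succ _ n

theorem pochQ_ne_zero {q : K} (hq : ∀ m : ℕ, 1 ≤ m → q ^ m ≠ 1) (n : ℕ) : pochQ q n ≠ 0 :=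
  prod_ne_zero_iff.2 fun k _ => sub_ne_zero.2 (hq (k + 1) k.succ_pos).symm

theorem succ_choose_two (i : ℕ) : (i + 1).choose 2 = i + i.choose 2 := by
  rw [Nat.choose_succ_succ', Nat.choose_one_right]

variable {q : K} (hq : ∀ m, pochQ q m ≠ 0)
include hq

theorem one_sub_pow_succ_ne_zero (m : ℕ) : 1 - q ^ (m + 1) ≠ 0 := by
  have := hq (m + 1)
  rw [pochQ_succ] at this
  exact right_ne_zero_of_mul this

theorem qPochhammerCoeff_add_eq (i j : ℕ) :
    qPochhammerCoeff q (j + i) i =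
      (-1) ^ i * q ^ i.choose 2 * pochQ q (j + i) / (pochQ q j * pochQ q i) := by
  induction i generalizing j with
  | zero => simp [div_self (hq j)]
  | succ i ih =>
    induction j with
    | zero =>
      have h := ih 0
      rw [zero_add] at h ⊢
      rw [qPochhammerCoeff, qPochhammerCoeff_eq_zero_of_lt q (Nat.lt_succ_self i), h,
        succ_choose_two]
      field_simp [hq i, hq (i + 1)]
      ring
    | succ j ihj =>
      rw [show j + (i + 1) = j + 1 + i by ring] at ihj
      rw [show j + 1 + (i + 1) = j + 1 + i + 1 by ring, qPochhammerCoeff, ihj, ih (j + 1),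
        pochQ_succ q (j + 1 + i), pochQ_succ q i, pochQ_succ q j, succ_choose_two]
      field_simp [hq (j + 1 + i), hq i, hq j, one_sub_pow_succ_ne_zero hq i,
        one_sub_pow_succ_ne_zero hq j, one_sub_pow_succ_ne_zero hq (j + 1 + i)]
      ring

theorem pow_mul_prod_range_div_pochQ (z : K) (k : ℕ) :
    q ^ k * (∏ l ∈ range k, (1 - q ^ l * z)) / pochQ q k =
      ∑ x ∈ antidiagonal k,
        (-1) ^ x.2 * q ^ (x.1 + (x.2 + 1).choose 2) * z ^ x.2 / (pochQ q x.1 * pochQ q x.2) := by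
  rw [prod_range_one_sub_pow_mul, ← Nat.sum_antidiagonal_eq_sum_range_succ
    (fun i _ => qPochhammerCoeff q k i * z ^ i), ← Nat.sum_antidiagonal_swap, mul_sum, sum_div]
  refine sum_congr rfl fun x hx => ?_
  rw [HasAntidiagonal.mem_antidiagonal] at hx
  subst hx
  rw [Prod.fst_swap, qPochhammerCoeff_add_eq hq, succ_choose_two, pow_add, pow_add]
  field_simp [hq x.1, hq x.2, hq (x.1 + x.2)]
  ring

theorem qPochhammerCoeff_inv (hq0 : q ≠ 0) (k e : ℕ) :
    qPochhammerCoeff q⁻¹ k e = q ^ e * (∏ j ∈ range e, (1 - q ^ j * q⁻¹ ^ k)) / pochQ q e := by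
  induction k generalizing e with
  | zero => cases e <;> simp [qPochhammerCoeff, prod_range_succ']
  | succ k ih =>
    cases e with
    | zero => simp
    | succ e =>
      have hshift : ∏ j ∈ range e, (1 - q ^ (j + 1) * q⁻¹ ^ (k + 1))
          = ∏ j ∈ range e, (1 - q ^ j * q⁻¹ ^ k) :=
        prod_congr rfl fun j _ => by simp only [inv_pow]; field_simp; ring
      rw [qPochhammerCoeff, ih, ih, prod_range_succ, prod_range_succ', hshift, pochQ_succ]
      simp only [inv_pow]
      field_simp [hq e, one_sub_pow_succ_ne_zero hq e]
      ring

end Field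

theorem sum_range_ite_add_eq_sum_antidiagonal {M : Type*} [AddCommMonoid M] (n : ℕ)
    (f : ℕ → ℕ → ℕ → ℕ → M) :
    ∑ d1 ∈ range (n + 1), ∑ d2 ∈ range (n + 1), ∑ d3 ∈ range (n + 1), ∑ d4 ∈ range (n + 1),
        (if d1 + d2 + d3 + d4 = n then f d1 d2 d3 d4 else 0) =
      ∑ x ∈ antidiagonal n, ∑ y ∈ antidiagonal x.1, ∑ z ∈ antidiagonal x.2,
        f y.1 y.2 z.1 z.2 := by
  simp only [← sum_product', sum_sigma', ← sum_filter]
  refine sum_nbij' (fun d => ⟨(d.1 + d.2.1, d.2.2.1 + d.2.2.2), (d.1, d.2.1), (d.2.2.1, d.2.2.2)⟩)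
    (fun w => ⟨w.2.1.1, w.2.1.2, w.2.2.1, w.2.2.2⟩) ?_ ?_ (fun _ _ => rfl) ?_ (fun _ _ => rfl)
  · rintro ⟨a, b, c, d⟩ h
    simp only [mem_sigma, mem_product, mem_filter, mem_range,
      HasAntidiagonal.mem_antidiagonal, and_true] at h ⊢
    omega
  · rintro ⟨⟨s, t⟩, ⟨a, b⟩, ⟨c, d⟩⟩ h
    simp only [mem_sigma, mem_product, mem_filter, mem_range,
      HasAntidiagonal.mem_antidiagonal] at h ⊢
    omega
  · rintro ⟨⟨s, t⟩, ⟨a, b⟩, ⟨c, d⟩⟩ h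
    simp only [mem_sigma, mem_product, HasAntidiagonal.mem_antidiagonal] at h
    obtain ⟨-, rfl, rfl⟩ := h
    rfl

theorem quiver_term_eq {K : Type*} [Field K] {q : K} (hq0 : q ≠ 0) (a : K) (d1 d2 d3 d4 : ℕ) :
    (-1) ^ d2 * q ^ (d1 + (d2 + 1).choose 2) * (a * q⁻¹) ^ d2 / (pochQ q d1 * pochQ q d2) *
        ((-1) ^ d4 * q ^ (d3 + (d4 + 1).choose 2) * (q⁻¹ ^ (d1 + d2)) ^ d4 /
          (pochQ q d3 * pochQ q d4)) =
      (-1 : K) ^ (d2 + d4) * a ^ d2 *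
        q ^ (((d1 + d3 + d2 * (d2 - 1) / 2 + d4 * (d4 + 1) / 2 : ℕ) : ℤ)
            - (d1 : ℤ) * (d4 : ℤ) - (d2 : ℤ) * (d4 : ℤ)) /
        (pochQ q d1 * pochQ q d2 * pochQ q d3 * pochQ q d4) := by
  have hexp : (((d1 + d3 + d2 * (d2 - 1) / 2 + d4 * (d4 + 1) / 2 : ℕ) : ℤ)
      - (d1 : ℤ) * (d4 : ℤ) - (d2 : ℤ) * (d4 : ℤ)) =
      ((d1 + d3 + d2.choose 2 + (d4 + 1).choose 2 : ℕ) : ℤ) - (((d1 + d2) * d4 : ℕ) : ℤ) := by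
    rw [← Nat.choose_two_right, Nat.choose_two_right (d4 + 1), Nat.add_sub_cancel, mul_comm d4]
    push_cast
    ring
  rw [hexp, zpow_sub₀ hq0, zpow_natCast, zpow_natCast, div_mul_div_comm, ← mul_assoc,
    succ_choose_two]
  congr 1
  · simp only [inv_pow, mul_pow, ← pow_mul]
    field_simp
    ring
  · ring

/-- Quiver form of the `F_K` invariant of the left-handed trefoil complement, stated
coefficientwise in `K⟦X⟧`.  The left-hand side is
`∑_{k≥0} qᵏ Xᵏ (∏_{j<k}(1 − X q^{−j})) (∏_{j<k}(1 − a q^{j−1})) / (q;q)_k`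
(whose `k`-th term has `X`-order `≥ k`, so only `k ≤ n` contribute to the coefficient of
`Xⁿ`), and the right-hand side is the quiver generating series
`∑_{d∈ℕ⁴} (−1)^{d₂+d₄} a^{d₂} q^{d₁+d₃+d₂(d₂−1)/2+d₄(d₄+1)/2−d₁d₄−d₂d₄}
X^{d₁+d₂+d₃+d₄} / ∏(q;q)_{d_i}`. -/
theorem trefoil_FK_quiver_form {K : Type*} [Field K] (q a : K) (hq0 : q ≠ 0)
    (hq : ∀ m : ℕ, 1 ≤ m → q ^ m ≠ 1) (n : ℕ) :
    (PowerSeries.coeff n)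
        (∑ k ∈ Finset.range (n + 1),
          PowerSeries.C
              (q ^ k * (∏ j ∈ Finset.range k, (1 - a * q ^ ((j : ℤ) - 1))) / pochQ q k) *
            PowerSeries.X ^ k *
            ∏ j ∈ Finset.range k, (1 - PowerSeries.C (q⁻¹ ^ j) * PowerSeries.X)) =
      ∑ d1 ∈ Finset.range (n + 1), ∑ d2 ∈ Finset.range (n + 1),
        ∑ d3 ∈ Finset.range (n + 1), ∑ d4 ∈ Finset.range (n + 1),
          if d1 + d2 + d3 + d4 = n then
            (-1 : K) ^ (d2 + d4) * a ^ d2 *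
              q ^ (((d1 + d3 + d2 * (d2 - 1) / 2 + d4 * (d4 + 1) / 2 : ℕ) : ℤ)
                  - (d1 : ℤ) * (d4 : ℤ) - (d2 : ℤ) * (d4 : ℤ)) /
              (pochQ q d1 * pochQ q d2 * pochQ q d3 * pochQ q d4)
          else 0 := by
  have hp := pochQ_ne_zero hq
  have ha (j : ℕ) : a * q ^ ((j : ℤ) - 1) = q ^ j * (a * q⁻¹) := by
    rw [zpow_sub_one₀ hq0, zpow_natCast]
    ring
  have hcoeff (k : ℕ) (hk : k ∈ range (n + 1)) :
      coeff n (C (q ^ k * (∏ j ∈ range k, (1 - q ^ j * (a * q⁻¹))) / pochQ q k) * X ^ k *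
          ∏ j ∈ range k, (1 - C (q⁻¹ ^ j) * X)) =
        q ^ k * (∏ j ∈ range k, (1 - q ^ j * (a * q⁻¹))) / pochQ q k *
          qPochhammerCoeff q⁻¹ k (n - k) := by
    rw [mul_assoc, coeff_C_mul, coeff_X_pow_mul', if_pos (Nat.lt_succ_iff.1 (mem_range.1 hk)),
      coeff_prod_range_one_sub_C_pow_mul_X]
  simp only [ha]
  rw [map_sum, sum_congr rfl hcoeff, ← Nat.sum_antidiagonal_eq_sum_range_succ
    (fun k e => q ^ k * (∏ j ∈ range k, (1 - q ^ j * (a * q⁻¹))) / pochQ q k *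
      qPochhammerCoeff q⁻¹ k e), sum_range_ite_add_eq_sum_antidiagonal]
  refine sum_congr rfl fun x _ => ?_
  rw [qPochhammerCoeff_inv hp hq0, pow_mul_prod_range_div_pochQ hp,
    pow_mul_prod_range_div_pochQ hp, sum_mul_sum]
  refine sum_congr rfl fun y hy => sum_congr rfl fun z _ => ?_
  rw [← HasAntidiagonal.mem_antidiagonal.1 hy]
  exact quiver_term_eq hq0 a y.1 y.2 z.1 z.2
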